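/- Define, for real m > −1 and real λ with (1+m)² − π²λ ≠ 0, η(m,λ) = 4π²λ / ((1+m)² − π²λ), β_m(m,λ) = −(2 + η(m,λ)) m − (10π²λ / (1+m)²)(1 + η(m,λ)/6), and β_λ(m,λ) = −2 η(m,λ) λ + (4π²λ² / (1+m)³)(1 + η(m,λ)/6). Then there exists a non-Gaussian fixed point: a pair (m*, λ*) with −1 < m* < 0, λ* > 0 and (1+m*)² − π²λ* > 0 such that β_m(m*,λ*) = 0 and β_λ(m*,λ*) = 0. -/

import Mathlib

/-!
Parametrize couplings by the value `e` of the anomalous dimension: for fixed `m`, the coupling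
`e (1 + m)² / ((4 + e) π²)` has `η = e`, and both beta functions become rational in `(m, e)`.
Away from `λ = 0`, `β_λ = 0` then reads `3 (4 + e) (1 + m) = 6 + e`, a curve `m = m(e)` lying in
`(-1, 0)` for `e > -3`. Along it `β_m = -(3 e² + 20 e - 12) / (3 (4 + e))`, whose positive root
`e* = 2 (√34 - 5) / 3` gives the fixed point.
-/

open Real

/-- Anomalous dimension of the φ⁴ truncation. -/
noncomputable def eta (m lam : ℝ) : ℝ :=
  4 * π ^ 2 * lam / ((1 + m) ^ 2 - π ^ 2 * lam)

/-- Beta function of the dimensionless mass squared. -/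
noncomputable def betaM (m lam : ℝ) : ℝ :=
  -(2 + eta m lam) * m - (10 * π ^ 2 * lam / (1 + m) ^ 2) * (1 + eta m lam / 6)

/-- Beta function of the dimensionless quartic melonic coupling. -/
noncomputable def betaLam (m lam : ℝ) : ℝ :=
  -2 * eta m lam * lam + (4 * π ^ 2 * lam ^ 2 / (1 + m) ^ 3) * (1 + eta m lam / 6)

/-- Inverts `lam ↦ eta m lam`: the coupling at which the anomalous dimension equals `e`. -/
noncomputable def couplingOfEta (m e : ℝ) : ℝ :=
  e * (1 + m) ^ 2 / ((4 + e) * π ^ 2)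

section couplingOfEta

variable {m e : ℝ}

lemma couplingOfEta_pos (hm : 1 + m ≠ 0) (he : 0 < e) : 0 < couplingOfEta m e := by
  unfold couplingOfEta
  positivity

lemma pi_sq_mul_couplingOfEta (he : 4 + e ≠ 0) :
    π ^ 2 * couplingOfEta m e = e / (4 + e) * (1 + m) ^ 2 := by
  unfold couplingOfEta
  field_simp

lemma one_add_sq_sub_pi_sq_mul_couplingOfEta (he : 4 + e ≠ 0) :
    (1 + m) ^ 2 - π ^ 2 * couplingOfEta m e = 4 / (4 + e) * (1 + m) ^ 2 := by
  rw [pi_sq_mul_couplingOfEta he]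
  field_simp
  ring

lemma eta_couplingOfEta (hm : 1 + m ≠ 0) (he : 4 + e ≠ 0) :
    eta m (couplingOfEta m e) = e := by
  rw [eta, one_add_sq_sub_pi_sq_mul_couplingOfEta he, mul_assoc, pi_sq_mul_couplingOfEta he]
  field_simp

lemma betaM_couplingOfEta (hm : 1 + m ≠ 0) (he : 4 + e ≠ 0) :
    betaM m (couplingOfEta m e) = -(2 + e) * m - 5 * e * (6 + e) / (3 * (4 + e)) := by
  rw [betaM, eta_couplingOfEta hm he, mul_assoc, pi_sq_mul_couplingOfEta he]
  field_simp
  ring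

lemma betaLam_couplingOfEta (hm : 1 + m ≠ 0) (he : 4 + e ≠ 0) :
    betaLam m (couplingOfEta m e) =
      2 * e * couplingOfEta m e * ((6 + e) / (3 * (4 + e) * (1 + m)) - 1) := by
  rw [betaLam, eta_couplingOfEta hm he,
    show 4 * π ^ 2 * couplingOfEta m e ^ 2 = 4 * (π ^ 2 * couplingOfEta m e) * couplingOfEta m e
      by ring, pi_sq_mul_couplingOfEta he]
  field_simp
  ring

end couplingOfEta

/-- Solves `(6 + e) / (3 * (4 + e) * (1 + m)) = 1`, the nontrivial factor of `betaLam` above. -/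
noncomputable def massOfEta (e : ℝ) : ℝ :=
  -2 * (3 + e) / (3 * (4 + e))

section massOfEta

variable {e : ℝ}

lemma one_add_massOfEta (he : 4 + e ≠ 0) : 1 + massOfEta e = (6 + e) / (3 * (4 + e)) := by
  unfold massOfEta
  field_simp
  ring

lemma massOfEta_mem_Ioo (he : -3 < e) : massOfEta e ∈ Set.Ioo (-1) 0 := by
  have h4 : 0 < 4 + e := by linarith
  have h1 : 0 < 1 + massOfEta e := by
    rw [one_add_massOfEta h4.ne']
    exact div_pos (by linarith) (by positivity)
  refine ⟨by linarith, ?_⟩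
  unfold massOfEta
  exact div_neg_of_neg_of_pos (by linarith) (by positivity)

lemma one_add_massOfEta_ne_zero (he : -3 < e) : 1 + massOfEta e ≠ 0 := by
  have := (massOfEta_mem_Ioo he).1
  linarith

lemma betaLam_massOfEta (he : -3 < e) :
    betaLam (massOfEta e) (couplingOfEta (massOfEta e) e) = 0 := by
  have h4 : 4 + e ≠ 0 := by linarith
  have h6 : 6 + e ≠ 0 := by linarith
  rw [betaLam_couplingOfEta (one_add_massOfEta_ne_zero he) h4, one_add_massOfEta h4]
  field_simp
  ring

lemma betaM_massOfEta (he : -3 < e) :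
    betaM (massOfEta e) (couplingOfEta (massOfEta e) e) =
      -(3 * e ^ 2 + 20 * e - 12) / (3 * (4 + e)) := by
  have h4 : 4 + e ≠ 0 := by linarith
  rw [betaM_couplingOfEta (one_add_massOfEta_ne_zero he) h4, massOfEta]
  field_simp
  ring

end massOfEta

noncomputable def etaStar : ℝ :=
  2 * (√34 - 5) / 3

lemma etaStar_pos : 0 < etaStar := by
  have : 5 < √34 := by
    rw [show (5 : ℝ) = √(5 ^ 2) by simp]
    exact Real.sqrt_lt_sqrt (by norm_num) (by norm_num)
  unfold etaStar
  linarith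

lemma etaStar_isRoot : 3 * etaStar ^ 2 + 20 * etaStar - 12 = 0 := by
  have h34 : √34 ^ 2 = 34 := Real.sq_sqrt (by norm_num)
  unfold etaStar
  linear_combination (4 / 3 : ℝ) * h34

/-- Existence of a non-Gaussian (Wilson–Fisher-like) fixed point of the truncated
flow, above the singularity line of the anomalous dimension. -/
theorem exists_nonGaussian_fixed_point :
    ∃ m lam : ℝ, -1 < m ∧ m < 0 ∧ 0 < lam ∧ 0 < (1 + m) ^ 2 - π ^ 2 * lam ∧
      betaM m lam = 0 ∧ betaLam m lam = 0 := by
  have he : -3 < etaStar := by linarith [etaStar_pos]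
  have h4 : 0 < 4 + etaStar := by linarith
  have hm := one_add_massOfEta_ne_zero he
  refine ⟨massOfEta etaStar, couplingOfEta (massOfEta etaStar) etaStar,
    (massOfEta_mem_Ioo he).1, (massOfEta_mem_Ioo he).2, couplingOfEta_pos hm etaStar_pos,
    ?_, ?_, betaLam_massOfEta he⟩
  · rw [one_add_sq_sub_pi_sq_mul_couplingOfEta h4.ne']
    positivity
  · rw [betaM_massOfEta he, etaStar_isRoot, neg_zero, zero_div]
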